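/- For 0 < ρ < 1 and c_0, c_1 > 0, the inequality √(1 − ρ²) + √((c_1/c_0) ρ²) < 1 holds if and only if 2√((1 − ρ²)/ρ²) < (c_0 − c_1)/√(c_0 c_1). -/

import Mathlib

/-! Write `a = √(1 - ρ²)` and `r = √(c₁/c₀)`, so that `(a, ρ)` lies on the unit circle. Both sides of
the equivalence reduce to `r (1 + a) < ρ`: the left one because `1 - a² = ρ²`, the right one through
the identity `(1 + a) (ρ (1 - r²) - 2 a r) = (ρ - r (1 + a)) (1 + a + r ρ)`. -/

section UnitCircle

variable {a ρ r : ℝ}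

theorem one_add_pos_of_sq_add_sq_eq_one (hρ : 0 < ρ) (h : a ^ 2 + ρ ^ 2 = 1) : 0 < 1 + a := by
  nlinarith

theorem add_mul_lt_one_iff_of_sq_add_sq_eq_one (hρ : 0 < ρ) (h : a ^ 2 + ρ ^ 2 = 1) :
    a + r * ρ < 1 ↔ r * (1 + a) < ρ := by
  have ha := one_add_pos_of_sq_add_sq_eq_one hρ h
  have hρ_sq : (1 - a) * (1 + a) = ρ * ρ := by linear_combination -h
  calc a + r * ρ < 1 ↔ r * ρ < 1 - a := by rw [lt_sub_iff_add_lt']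
    _ ↔ r * ρ * (1 + a) < ρ * ρ := by rw [← hρ_sq, mul_lt_mul_iff_left₀ ha]
    _ ↔ r * (1 + a) < ρ := by rw [mul_right_comm, mul_lt_mul_iff_left₀ hρ]

theorem two_mul_mul_lt_iff_of_sq_add_sq_eq_one (hρ : 0 < ρ) (hr : 0 ≤ r)
    (h : a ^ 2 + ρ ^ 2 = 1) :
    2 * a * r < ρ * (1 - r ^ 2) ↔ r * (1 + a) < ρ := by
  have ha := one_add_pos_of_sq_add_sq_eq_one hρ h
  have key : (1 + a) * (ρ * (1 - r ^ 2) - 2 * a * r) = (ρ - r * (1 + a)) * (1 + a + r * ρ) := by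
    linear_combination -r * h
  have hpos : 0 < 1 + a + r * ρ := by positivity
  rw [← sub_pos, ← mul_pos_iff_of_pos_left ha, key, mul_pos_iff_of_pos_right hpos, sub_pos]

end UnitCircle

/-- For `0 < ρ < 1` and `c₀, c₁ > 0`, the inequality
`√(1 − ρ²) + √((c₁/c₀) ρ²) < 1` holds if and only if
`2 √((1 − ρ²)/ρ²) < (c₀ − c₁)/√(c₀ c₁)`. -/
theorem bifidelity_condition_iff (ρ c₀ c₁ : ℝ)
    (hρ0 : 0 < ρ) (hρ1 : ρ < 1) (hc₀ : 0 < c₀) (hc₁ : 0 < c₁) :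
    Real.sqrt (1 - ρ ^ 2) + Real.sqrt (c₁ / c₀ * ρ ^ 2) < 1 ↔
      2 * Real.sqrt ((1 - ρ ^ 2) / ρ ^ 2) < (c₀ - c₁) / Real.sqrt (c₀ * c₁) := by
  have hρ2 : 0 ≤ 1 - ρ ^ 2 := by nlinarith
  have hc : 0 ≤ c₁ / c₀ := by positivity
  have h₁ : √(c₁ / c₀ * ρ ^ 2) = √(c₁ / c₀) * ρ := by
    rw [Real.sqrt_mul hc, Real.sqrt_sq hρ0.le]
  have h₂ : √((1 - ρ ^ 2) / ρ ^ 2) = √(1 - ρ ^ 2) / ρ := by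
    rw [Real.sqrt_div hρ2, Real.sqrt_sq hρ0.le]
  have h₃ : √(c₀ * c₁) = c₀ * √(c₁ / c₀) := by
    rw [show c₀ * c₁ = c₀ ^ 2 * (c₁ / c₀) by field_simp, Real.sqrt_mul (sq_nonneg _),
      Real.sqrt_sq hc₀.le]
  have hcircle : √(1 - ρ ^ 2) ^ 2 + ρ ^ 2 = 1 := by rw [Real.sq_sqrt hρ2]; ring
  have hr : 0 < √(c₁ / c₀) := Real.sqrt_pos.2 (div_pos hc₁ hc₀)
  have h₄ : (c₀ - c₁) / (c₀ * √(c₁ / c₀)) = (1 - √(c₁ / c₀) ^ 2) / √(c₁ / c₀) := by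
    rw [Real.sq_sqrt hc]; field_simp
  rw [h₁, h₂, h₃, h₄, mul_div_assoc', div_lt_div_iff₀ hρ0 hr, mul_comm (1 - _) ρ,
    add_mul_lt_one_iff_of_sq_add_sq_eq_one hρ0 hcircle,
    two_mul_mul_lt_iff_of_sq_add_sq_eq_one hρ0 hr.le hcircle]
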